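/- Let H, σ : ℝ³ → M₃(ℝ) be differentiable symmetric trace-free matrix fields and ω, a : ℝ³ → ℝ³ differentiable vector fields, satisfying pointwise [σ,H] = 3Hω, curl H = −2 a∧H, and H = curl σ + (Dω)^ + 2 a⊗̂ω. Then pointwise div[σ,H] = Tr H² − ⟨H, Dω⟩ − 8⟨a, Hω⟩, where [σ,H] denotes the vector field x ↦ [σ(x),H(x)] and Tr H² = ⟨H,H⟩ since H is symmetric. -/

import Mathlib

open Matrix BigOperators
open scoped RealInnerProductSpace

noncomputable section

/-- Vectors in ℝ³. -/
abbrev V3 := Fin 3 → ℝ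

/-- 3×3 real matrices. -/
abbrev M3 := Matrix (Fin 3) (Fin 3) ℝ

/-- The Levi-Civita symbol on three indices. -/
def eps (a b c : Fin 3) : ℝ :=
  if (a, b, c) = (0, 1, 2) ∨ (a, b, c) = (1, 2, 0) ∨ (a, b, c) = (2, 0, 1) then 1
  else if (a, b, c) = (0, 2, 1) ∨ (a, b, c) = (2, 1, 0) ∨ (a, b, c) = (1, 0, 2) then -1
  else 0

/-- The Frobenius inner product ⟨A,B⟩ = Σ_{i,j} A_{ij} B_{ij}. -/
def frob (A B : M3) : ℝ := ∑ i, ∑ j, A i j * B i j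

/-- The Euclidean inner product on ℝ³. -/
def dot3 (v w : V3) : ℝ := ∑ a, v a * w a

/-- The generalized vector product of two 3×3 matrices:
    [A,B]_a = Σ_{b,c} ε_{abc} (AB)_{bc}. -/
def mcross (A B : M3) : V3 := fun a => ∑ b, ∑ c, eps a b c * (A * B) b c

/-- v ∧ B : (v∧B)_{ab} = ½ Σ_{c,d} (ε_{acd} v_c B_{db} + ε_{bcd} v_c B_{da}). -/
def vwedge (v : V3) (B : M3) : M3 := fun a b =>
  (1 / 2 : ℝ) * ∑ c, ∑ d, (eps a c d * v c * B d b + eps b c d * v c * B d a)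

/-- The tensor product (a⊗ω)_{ij} = a_i ω_j. -/
def tens (a ω : V3) : M3 := fun i j => a i * ω j

/-- The trace-free symmetric part X^ = ½(X+Xᵀ) − (1/3)(Tr X)·I. -/
def hat (X : M3) : M3 := (1 / 2 : ℝ) • (X + Xᵀ) - ((1 / 3 : ℝ) * X.trace) • (1 : M3)

/-- The partial derivative ∂_c f at x of a scalar field f : ℝ³ → ℝ. -/
def pd (c : Fin 3) (f : V3 → ℝ) (x : V3) : ℝ := fderiv ℝ f x (Pi.single c 1)

/-- The curl of a matrix field:
    (curl A)_{ab} = ½ Σ_{c,d} (ε_{acd} ∂_c A_{db} + ε_{bcd} ∂_c A_{da}). -/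
def curlM (A : V3 → M3) (x : V3) : M3 := fun a b =>
  (1 / 2 : ℝ) * ∑ c, ∑ d,
    (eps a c d * pd c (fun y => A y d b) x + eps b c d * pd c (fun y => A y d a) x)

/-- The divergence of a vector field: div w = Σ_a ∂_a w_a. -/
def divV (w : V3 → V3) (x : V3) : ℝ := ∑ a, pd a (fun y => w y a) x

/-- The divergence of a matrix field: (div A)_b = Σ_a ∂_a A_{ab}. -/
def divM (A : V3 → M3) (x : V3) : V3 := fun b => ∑ a, pd a (fun y => A y a b) x

/-- The Jacobian matrix field (Dw)_{ab} = ∂_a w_b. -/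
def jac (w : V3 → V3) (x : V3) : M3 := fun a b => pd a (fun y => w y b) x

/-!
By Leibniz's rule and a reindexing of the Levi-Civita contractions, for symmetric fields
`div [σ,H] = ⟨H, curl σ⟩ - ⟨σ, curl H⟩`. By `curl H = -2 a∧H` and the symmetry of `σ`, the
second pairing is `-2 a·[H,σ] = 2 a·[σ,H] = 6 a·Hω`. In the first one, `curl σ` is read off the
Ricci relation, and the hats may be dropped when pairing against the symmetric trace-free `H`,
leaving `⟨H,H⟩ - ⟨H,Dω⟩ - 2 a·Hω`.
-/

lemma dot3_eq_dotProduct (v w : V3) : dot3 v w = v ⬝ᵥ w := rfl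

lemma frob_add_right (A B C : M3) : frob A (B + C) = frob A B + frob A C := by
  simp only [frob, Matrix.add_apply, mul_add, Finset.sum_add_distrib]

lemma frob_sub_right (A B C : M3) : frob A (B - C) = frob A B - frob A C := by
  simp only [frob, Matrix.sub_apply, mul_sub, Finset.sum_sub_distrib]

lemma frob_smul_right (A B : M3) (r : ℝ) : frob A (r • B) = r * frob A B := by
  simp only [frob, Matrix.smul_apply, smul_eq_mul, Finset.mul_sum]
  exact Finset.sum_congr rfl fun _ _ => Finset.sum_congr rfl fun _ _ => by ring

lemma frob_one_right (A : M3) : frob A 1 = A.trace := by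
  simp [frob, Matrix.one_apply, Matrix.trace]

lemma frob_transpose_right_of_symm {A : M3} (hA : Aᵀ = A) (B : M3) : frob A Bᵀ = frob A B := by
  conv_lhs => rw [← hA]
  simp only [frob, Matrix.transpose_apply]
  exact Finset.sum_comm

lemma frob_symmPart_of_symm {A : M3} (hA : Aᵀ = A) (B : M3) :
    frob A ((1 / 2 : ℝ) • (B + Bᵀ)) = frob A B := by
  rw [frob_smul_right, frob_add_right, frob_transpose_right_of_symm hA]
  ring

lemma frob_hat_of_symm_of_trace_eq_zero {A : M3} (hA : Aᵀ = A) (hA₀ : A.trace = 0) (B : M3) :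
    frob A (hat B) = frob A B := by
  rw [hat, frob_sub_right, frob_symmPart_of_symm hA, frob_smul_right, frob_one_right, hA₀,
    mul_zero, sub_zero]

lemma frob_self_of_symm {A : M3} (hA : Aᵀ = A) : frob A A = (A * A).trace := by
  rw [← frob_transpose_right_of_symm hA A]
  simp only [frob, Matrix.trace, Matrix.diag, Matrix.mul_apply, Matrix.transpose_apply]

lemma frob_tens (A : M3) (v w : V3) : frob A (tens v w) = dot3 v (A *ᵥ w) := by
  simp only [frob, tens, dot3, Matrix.mulVec, dotProduct, Finset.mul_sum]
  exact Finset.sum_congr rfl fun _ _ => Finset.sum_congr rfl fun _ _ => by ring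

lemma eps_swap (a b c : Fin 3) : eps a c b = -eps a b c := by
  fin_cases a <;> fin_cases b <;> fin_cases c <;> simp [eps]

lemma mcross_transpose (A B : M3) : mcross Bᵀ Aᵀ = -mcross A B := by
  have hBA : ∀ b c, (Bᵀ * Aᵀ) b c = (A * B) c b := fun b c => by
    rw [← Matrix.transpose_mul, Matrix.transpose_apply]
  ext i
  simp only [mcross, hBA, Pi.neg_apply, ← Finset.sum_neg_distrib]
  rw [Finset.sum_comm]
  refine Finset.sum_congr rfl fun b _ => Finset.sum_congr rfl fun c _ => ?_
  rw [eps_swap, neg_mul]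

lemma mcross_comm_of_symm {A B : M3} (hA : Aᵀ = A) (hB : Bᵀ = B) :
    mcross B A = -mcross A B := by
  rw [← mcross_transpose, hA, hB]

/-- `crossMat v *ᵥ w` is the cross product `v × w`. -/
def crossMat (v : V3) : M3 := fun a d => ∑ c, eps a c d * v c

lemma vwedge_eq (v : V3) (B : M3) :
    vwedge v B = (1 / 2 : ℝ) • (crossMat v * B + (crossMat v * B)ᵀ) := by
  ext a b
  simp only [vwedge, crossMat, Matrix.smul_apply, Matrix.add_apply, Matrix.transpose_apply,
    Matrix.mul_apply, Finset.sum_mul, smul_eq_mul, Finset.sum_add_distrib]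
  rw [Finset.sum_comm (γ := Fin 3),
    Finset.sum_comm (γ := Fin 3) (f := fun d c => eps b c d * v c * B d a)]

lemma frob_crossMat_mul (A B : M3) (v : V3) : frob A (crossMat v * B) = dot3 v (mcross B Aᵀ) := by
  simp only [frob, crossMat, dot3, mcross, eps, Matrix.mul_apply, Matrix.transpose_apply,
    Fin.sum_univ_three, Prod.mk.injEq, Fin.isValue, Fin.reduceEq, true_and, false_and, and_true,
    and_false, or_false, false_or, ↓reduceIte]
  ring

lemma frob_vwedge_of_symm {A : M3} (hA : Aᵀ = A) (v : V3) (B : M3) :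
    frob A (vwedge v B) = dot3 v (mcross B A) := by
  rw [vwedge_eq, frob_symmPart_of_symm hA, frob_crossMat_mul, hA]

lemma pd_sum (c : Fin 3) {ι : Type*} (s : Finset ι) (f : ι → V3 → ℝ)
    (hf : ∀ i ∈ s, Differentiable ℝ (f i)) (x : V3) :
    pd c (fun y => ∑ i ∈ s, f i y) x = ∑ i ∈ s, pd c (f i) x := by
  simp [pd, fderiv_fun_sum fun i hi => (hf i hi).differentiableAt]

lemma pd_const_mul (c : Fin 3) (r : ℝ) {f : V3 → ℝ} (hf : Differentiable ℝ f) (x : V3) :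
    pd c (fun y => r * f y) x = r * pd c f x := by
  simp [pd, fderiv_const_mul hf.differentiableAt]

lemma pd_mul (c : Fin 3) {f g : V3 → ℝ} (hf : Differentiable ℝ f) (hg : Differentiable ℝ g)
    (x : V3) : pd c (fun y => f y * g y) x = pd c f x * g x + f x * pd c g x := by
  simp only [pd, fderiv_fun_mul hf.differentiableAt hg.differentiableAt,
    _root_.add_apply, _root_.smul_apply, smul_eq_mul]
  ring

def pdM (c : Fin 3) (A : V3 → M3) (x : V3) : M3 := fun i j => pd c (fun y => A y i j) x

lemma pdM_mul (c : Fin 3) {A B : V3 → M3} (hA : ∀ i j, Differentiable ℝ fun y => A y i j)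
    (hB : ∀ i j, Differentiable ℝ fun y => B y i j) (x : V3) :
    pdM c (fun y => A y * B y) x = pdM c A x * B x + A x * pdM c B x := by
  ext i j
  simp only [pdM, Matrix.mul_apply, Matrix.add_apply]
  rw [pd_sum c _ (fun k y => A y i k * B y k j) fun k _ => (hA i k).mul (hB k j),
    ← Finset.sum_add_distrib]
  exact Finset.sum_congr rfl fun k _ => pd_mul c (hA i k) (hB k j) x

lemma pdM_transpose_of_symm (c : Fin 3) {A : V3 → M3} (hA : ∀ y, (A y)ᵀ = A y) (x : V3) :
    (pdM c A x)ᵀ = pdM c A x := by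
  ext i j
  simp only [pdM, Matrix.transpose_apply]
  congr 1
  funext y
  rw [← hA y, Matrix.transpose_apply, hA y]

lemma pd_mcross (c : Fin 3) {A B : V3 → M3} (hA : ∀ i j, Differentiable ℝ fun y => A y i j)
    (hB : ∀ i j, Differentiable ℝ fun y => B y i j) (x : V3) (i : Fin 3) :
    pd c (fun y => mcross (A y) (B y) i) x
      = mcross (pdM c A x) (B x) i + mcross (A x) (pdM c B x) i := by
  have hAB : ∀ b d, Differentiable ℝ fun y => (A y * B y) b d := fun b d => by
    simp only [Matrix.mul_apply]
    fun_prop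
  calc pd c (fun y => mcross (A y) (B y) i) x
      = ∑ b, ∑ d, eps i b d * pdM c (fun y => A y * B y) x b d := by
        simp only [mcross]
        rw [pd_sum c _ _ fun b _ => Differentiable.fun_sum fun d _ => (hAB b d).const_mul _]
        refine Finset.sum_congr rfl fun b _ => ?_
        rw [pd_sum c _ _ fun d _ => (hAB b d).const_mul _]
        exact Finset.sum_congr rfl fun d _ => pd_const_mul c _ (hAB b d) x
    _ = _ := by
        simp only [pdM_mul c hA hB, mcross, Matrix.add_apply, mul_add, Finset.sum_add_distrib]

/-- The unsymmetrised curl `Σ ε_{acd} ∂_c A_{db}`, for an arbitrary family `P c` standing for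
`∂_c A`. -/
def curlOfGrad (P : Fin 3 → M3) : M3 := fun a b => ∑ c, ∑ d, eps a c d * P c d b

lemma curlM_eq (A : V3 → M3) (x : V3) :
    curlM A x = (1 / 2 : ℝ) • (curlOfGrad (fun c => pdM c A x)
      + (curlOfGrad fun c => pdM c A x)ᵀ) := by
  ext a b
  simp only [curlM, curlOfGrad, pdM, Matrix.smul_apply, Matrix.add_apply, Matrix.transpose_apply,
    smul_eq_mul, Finset.sum_add_distrib]

lemma sum_mcross_left (P : Fin 3 → M3) (B : M3) :
    ∑ i, mcross (P i) B i = frob B (curlOfGrad P)ᵀ := by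
  simp only [mcross, frob, curlOfGrad, eps, Matrix.mul_apply, Matrix.transpose_apply,
    Fin.sum_univ_three, Prod.mk.injEq, Fin.isValue, Fin.reduceEq, and_true, and_false, or_false,
    false_or, ↓reduceIte]
  ring

lemma sum_mcross_right (A : M3) (Q : Fin 3 → M3) :
    ∑ i, mcross A (Q i) i = -frob A (curlOfGrad fun c => (Q c)ᵀ) := by
  simp only [mcross, frob, curlOfGrad, eps, Matrix.mul_apply, Matrix.transpose_apply,
    Fin.sum_univ_three, Prod.mk.injEq, Fin.isValue, Fin.reduceEq, and_true, and_false, or_false,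
    false_or, ↓reduceIte]
  ring

lemma divV_mcross {A B : V3 → M3} (hA : ∀ i j, Differentiable ℝ fun y => A y i j)
    (hB : ∀ i j, Differentiable ℝ fun y => B y i j) (x : V3) :
    divV (fun y => mcross (A y) (B y)) x
      = frob (B x) (curlOfGrad fun c => pdM c A x)ᵀ
        - frob (A x) (curlOfGrad fun c => (pdM c B x)ᵀ) := by
  simp only [divV, pd_mcross _ hA hB, Finset.sum_add_distrib, sum_mcross_left, sum_mcross_right,
    sub_eq_add_neg]

lemma divV_mcross_of_symm {A B : V3 → M3} (hA : ∀ i j, Differentiable ℝ fun y => A y i j)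
    (hB : ∀ i j, Differentiable ℝ fun y => B y i j) (hAsymm : ∀ y, (A y)ᵀ = A y)
    (hBsymm : ∀ y, (B y)ᵀ = B y) (x : V3) :
    divV (fun y => mcross (A y) (B y)) x = frob (B x) (curlM A x) - frob (A x) (curlM B x) := by
  simp only [divV_mcross hA hB x, curlM_eq, frob_symmPart_of_symm (hAsymm x),
    frob_symmPart_of_symm (hBsymm x), frob_transpose_right_of_symm (hBsymm x),
    pdM_transpose_of_symm _ hBsymm]

theorem stmt_4_general (H σ : V3 → M3) (ω a : V3 → V3)
    (hH : ∀ i j, Differentiable ℝ fun x => H x i j)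
    (hσ : ∀ i j, Differentiable ℝ fun x => σ x i j)
    (hHsym : ∀ x, (H x)ᵀ = H x) (hHtf : ∀ x, (H x).trace = 0)
    (hσsym : ∀ x, (σ x)ᵀ = σ x)
    (hbi1 : ∀ x, mcross (σ x) (H x) = (3 : ℝ) • (H x).mulVec (ω x))
    (hbi3 : ∀ x, curlM H x = -(2 : ℝ) • vwedge (a x) (H x))
    (hRicci : ∀ x, H x = curlM σ x + hat (jac ω x) + (2 : ℝ) • hat (tens (a x) (ω x))) :
    ∀ x, divV (fun y => mcross (σ y) (H y)) x
      = (H x * H x).trace - frob (H x) (jac ω x)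
        - 8 * dot3 (a x) ((H x).mulVec (ω x)) := by
  intro x
  have hcurlσ : curlM σ x = H x - (2 : ℝ) • hat (tens (a x) (ω x)) - hat (jac ω x) :=
    eq_sub_of_add_eq (eq_sub_of_add_eq (hRicci x).symm)
  have hσcurlH : frob (σ x) (curlM H x) = 6 * dot3 (a x) (H x *ᵥ ω x) := by
    rw [hbi3 x, frob_smul_right, frob_vwedge_of_symm (hσsym x),
      mcross_comm_of_symm (hσsym x) (hHsym x), hbi1 x]
    simp only [dot3_eq_dotProduct, dotProduct_neg, dotProduct_smul, smul_eq_mul]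
    ring
  rw [divV_mcross_of_symm hσ hH hσsym hHsym x, hσcurlH, hcurlσ, frob_sub_right, frob_sub_right,
    frob_smul_right, frob_hat_of_symm_of_trace_eq_zero (hHsym x) (hHtf x),
    frob_hat_of_symm_of_trace_eq_zero (hHsym x) (hHtf x), frob_self_of_symm (hHsym x), frob_tens]
  ring

/-- from [σ,H] = 3Hω, curl H = −2 a∧H and
    H = curl σ + (Dω)^ + 2 a⊗̂ω one gets
    div[σ,H] = Tr H² − ⟨H, Dω⟩ − 8⟨a, Hω⟩. -/
theorem stmt_4 (H σ : V3 → M3) (ω a : V3 → V3)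
    (hH : ∀ i j, Differentiable ℝ fun x => H x i j)
    (hσ : ∀ i j, Differentiable ℝ fun x => σ x i j)
    (hω : ∀ i, Differentiable ℝ fun x => ω x i)
    (ha : ∀ i, Differentiable ℝ fun x => a x i)
    (hHsym : ∀ x, (H x)ᵀ = H x) (hHtf : ∀ x, (H x).trace = 0)
    (hσsym : ∀ x, (σ x)ᵀ = σ x) (hσtf : ∀ x, (σ x).trace = 0)
    (hbi1 : ∀ x, mcross (σ x) (H x) = (3 : ℝ) • (H x).mulVec (ω x))
    (hbi3 : ∀ x, curlM H x = -(2 : ℝ) • vwedge (a x) (H x))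
    (hRicci : ∀ x, H x = curlM σ x + hat (jac ω x) + (2 : ℝ) • hat (tens (a x) (ω x))) :
    ∀ x, divV (fun y => mcross (σ y) (H y)) x
      = (H x * H x).trace - frob (H x) (jac ω x)
        - 8 * dot3 (a x) ((H x).mulVec (ω x)) :=
  stmt_4_general H σ ω a hH hσ hHsym hHtf hσsym hbi1 hbi3 hRicci
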